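/- If the sequent φ ⊢ χ is valid on a frame F (i.e., at every pointed model on F, truth of φ implies truth of χ), then the contraposed sequent ¬χ ⊢ ¬φ is also valid on F. -/

import Mathlib

/-- Formulas of the language with ¬, ∧, ∨, □, ■, 𝐈 and ▲. -/
inductive Form : Type
  | var : ℕ → Form
  | neg : Form → Form
  | conj : Form → Form → Form
  | disj : Form → Form → Form
  | box : Form → Form
  | bbox : Form → Form
  | ign : Form → Form
  | tri : Form → Form

/-- A Kripke model for Belnap–Dunn modal logic. -/
structure Model (W : Type) where
  R : W → W → Prop
  vp : ℕ → W → Prop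
  vn : ℕ → W → Prop

mutual
  /-- support of truth -/
  def tr {W : Type} (M : Model W) : Form → W → Prop
    | .var n, w => M.vp n w
    | .neg φ, w => fa M φ w
    | .conj φ ψ, w => tr M φ w ∧ tr M ψ w
    | .disj φ ψ, w => tr M φ w ∨ tr M ψ w
    | .box φ, w => ∀ w', M.R w w' → tr M φ w'
    | .bbox φ, w => (∀ w', M.R w w' → tr M φ w') ∧
        ∀ w₁ w₂, M.R w w₁ → M.R w w₂ → fa M φ w₁ → fa M φ w₂
    | .ign φ, w => tr M φ w ∧ (∀ w', M.R w w' → w' ≠ w → fa M φ w') ∧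
        ∀ w₁ w₂, M.R w w₁ → w₁ ≠ w → M.R w w₂ → w₂ ≠ w → tr M φ w₁ → tr M φ w₂
    | .tri φ, w => (∀ w₁ w₂, M.R w w₁ → M.R w w₂ →
          (tr M φ w₁ → tr M φ w₂) ∧ (fa M φ w₁ → fa M φ w₂)) ∧
        ∀ w', M.R w w' → tr M φ w' ∨ fa M φ w'
  /-- support of falsity -/
  def fa {W : Type} (M : Model W) : Form → W → Prop
    | .var n, w => M.vn n w
    | .neg φ, w => tr M φ w
    | .conj φ ψ, w => fa M φ w ∨ fa M ψ w
    | .disj φ ψ, w => fa M φ w ∧ fa M ψ w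
    | .box φ, w => ∃ w', M.R w w' ∧ fa M φ w'
    | .bbox φ, w => (∃ w', M.R w w' ∧ fa M φ w') ∨
        ∃ w₁ w₂, M.R w w₁ ∧ M.R w w₂ ∧ tr M φ w₁ ∧ ¬ tr M φ w₂
    | .ign φ, w => fa M φ w ∨ (∃ w', M.R w w' ∧ w' ≠ w ∧ tr M φ w') ∨
        ∃ w₁ w₂, (M.R w w₁ ∧ w₁ ≠ w) ∧ (M.R w w₂ ∧ w₂ ≠ w) ∧ ¬ fa M φ w₁ ∧ fa M φ w₂
    | .tri φ, w => (∃ w₁ w₂, M.R w w₁ ∧ M.R w w₂ ∧ tr M φ w₁ ∧ ¬ tr M φ w₂) ∨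
        (∃ w₁ w₂, M.R w w₁ ∧ M.R w w₂ ∧ fa M φ w₁ ∧ ¬ fa M φ w₂) ∨
        (∃ w₁ w₂, M.R w w₁ ∧ M.R w w₂ ∧ tr M φ w₁ ∧ fa M φ w₂)
end

/-- φ contains an occurrence of □ -/
def hasBox : Form → Prop
  | .var _ => False
  | .neg φ => hasBox φ
  | .conj φ ψ => hasBox φ ∨ hasBox ψ
  | .disj φ ψ => hasBox φ ∨ hasBox ψ
  | .box _ => True
  | .bbox φ => hasBox φ
  | .ign φ => hasBox φ
  | .tri φ => hasBox φ

/-- φ contains an occurrence of ■ -/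
def hasBBox : Form → Prop
  | .var _ => False
  | .neg φ => hasBBox φ
  | .conj φ ψ => hasBBox φ ∨ hasBBox ψ
  | .disj φ ψ => hasBBox φ ∨ hasBBox ψ
  | .box φ => hasBBox φ
  | .bbox _ => True
  | .ign φ => hasBBox φ
  | .tri φ => hasBBox φ

/-- φ contains an occurrence of 𝐈 -/
def hasIgn : Form → Prop
  | .var _ => False
  | .neg φ => hasIgn φ
  | .conj φ ψ => hasIgn φ ∨ hasIgn ψ
  | .disj φ ψ => hasIgn φ ∨ hasIgn ψ
  | .box φ => hasIgn φ
  | .bbox φ => hasIgn φ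
  | .ign _ => True
  | .tri φ => hasIgn φ

/-- φ contains an occurrence of ▲ -/
def hasTri : Form → Prop
  | .var _ => False
  | .neg φ => hasTri φ
  | .conj φ ψ => hasTri φ ∨ hasTri ψ
  | .disj φ ψ => hasTri φ ∨ hasTri ψ
  | .box φ => hasTri φ
  | .bbox φ => hasTri φ
  | .ign φ => hasTri φ
  | .tri _ => True

/-- validity of the sequent φ ⊢ χ on the frame (W,R) -/
def validOn {W : Type} (R : W → W → Prop) (φ χ : Form) : Prop :=
  ∀ (vp vn : ℕ → W → Prop) (w : W), tr ⟨R, vp, vn⟩ φ w → tr ⟨R, vp, vn⟩ χ w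

/-- ♦φ := ¬■¬φ -/
def dia (φ : Form) : Form := .neg (.bbox (.neg φ))

/-! The dual model replaces the positive valuation by the complement of the negative one and vice
versa, so a state is a gap for a formula in the dual model exactly when it is a glut in the original
one. For formulas without ▲ this gives `tr M.dual φ w ↔ ¬ fa M φ w`. Now if `¬χ` is true at `w`,
i.e. `fa M χ w`, but `fa M φ w` fails, then `φ` is true at `w` in the dual model, which lives on the
same frame; so is `χ` by validity, contradicting `fa M χ w`. -/

def Model.dual {W : Type} (M : Model W) : Model W :=
  ⟨M.R, fun n w => ¬ M.vn n w, fun n w => ¬ M.vp n w⟩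

namespace Model

variable {W : Type} (M : Model W)

@[simp]
theorem dual_R : M.dual.R = M.R := rfl

theorem tr_dual_iff_and_fa_dual_iff (φ : Form) (ht : ¬ hasTri φ) (w : W) :
    (tr M.dual φ w ↔ ¬ fa M φ w) ∧ (fa M.dual φ w ↔ ¬ tr M φ w) := by
  induction φ generalizing w with
  | var n => exact ⟨Iff.rfl, Iff.rfl⟩
  | neg φ ih => exact (ih ht w).symm
  | conj φ ψ ihφ ihψ | disj φ ψ ihφ ihψ =>
      simp only [hasTri, not_or] at ht
      simp only [tr, fa, (ihφ ht.1 _).1, (ihφ ht.1 _).2, (ihψ ht.2 _).1, (ihψ ht.2 _).2]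
      tauto
  | box φ ih | bbox φ ih | ign φ ih =>
      -- in the ■ and 𝐈 clauses, the dual of `fa w₁ → fa w₂` is `tr w₂ → tr w₁`: the successors swap
      simp only [tr, fa, dual_R, fun w => (ih ht w).1, fun w => (ih ht w).2]
      constructor <;> grind
  | tri φ => exact absurd trivial ht

end Model

/-- contraposition is sound on every frame (language {¬,∧,∨,■,𝐈}). -/
theorem contraposition_valid {W : Type} [Nonempty W] (R : W → W → Prop) (φ χ : Form)
    (h1 : ¬ hasBox φ) (h2 : ¬ hasTri φ) (h3 : ¬ hasBox χ) (h4 : ¬ hasTri χ)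
    (h : validOn R φ χ) : validOn R (.neg χ) (.neg φ) := by
  intro vp vn w (hχ : fa ⟨R, vp, vn⟩ χ w)
  show fa ⟨R, vp, vn⟩ φ w
  set M : Model W := ⟨R, vp, vn⟩
  by_contra hφ
  have hφ_dual : tr M.dual φ w := (M.tr_dual_iff_and_fa_dual_iff φ h2 w).1.mpr hφ
  have hχ_dual : tr M.dual χ w := h _ _ w hφ_dual
  exact (M.tr_dual_iff_and_fa_dual_iff χ h4 w).1.mp hχ_dual hχ
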